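/- Let U = !![l₁,l₂;r₁,r₂] be a 2×2 complex unitary matrix with det U = 1 and l₂ ≠ 0, and let θ₁ ∈ ℝ satisfy l₁ = |l₁|e^{iθ₁}. For κ ∈ ℝ define the vectors e₊(κ) = (e^{−iκ}, −(e^{iθ₁}/l₂)(|l₁|e^{−iκ} − e^{iγ(κ)})) and e₋(κ) = (e^{−iκ}, −(e^{iθ₁}/l₂)(|l₁|e^{−iκ} − e^{−iγ(κ)})) in ℂ². Then for every k ∈ ℝ, U(k)·e₊(k−θ₁) = e^{iγ(k−θ₁)}·e₊(k−θ₁) and U(k)·e₋(k−θ₁) = e^{−iγ(k−θ₁)}·e₋(k−θ₁), where U(k) := !![e^{−ik}l₁, e^{−ik}l₂; e^{ik}r₁, e^{ik}r₂]. Moreover, if 0 < sin γ(k−θ₁) then e₊(k−θ₁) and e₋(k−θ₁) are linearly independent, so that U(k) = S(k−θ₁)·diag(e^{iγ(k−θ₁)}, e^{−iγ(k−θ₁)})·S(k−θ₁)⁻¹, where S(κ) is the 2×2 matrix with columns e₊(κ) and e₋(κ). -/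

import Mathlib

open Matrix Complex

noncomputable section

/-- `γ(k) = arccos(|l₁| cos k)`. -/
def gam (l₁ : ℂ) (k : ℝ) : ℝ := Real.arccos (‖l₁‖ * Real.cos k)

/-- `U(k) = !![e^{−ik}l₁, e^{−ik}l₂; e^{ik}r₁, e^{ik}r₂]`. -/
def Uk (l₁ l₂ r₁ r₂ : ℂ) (k : ℝ) : Matrix (Fin 2) (Fin 2) ℂ :=
  !![Complex.exp (-Complex.I * k) * l₁, Complex.exp (-Complex.I * k) * l₂;
     Complex.exp (Complex.I * k) * r₁, Complex.exp (Complex.I * k) * r₂]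

/-- The eigenvector `e₊(κ)`. -/
def eP (l₁ l₂ : ℂ) (θ₁ : ℝ) (κ : ℝ) : Fin 2 → ℂ :=
  ![Complex.exp (-Complex.I * κ),
    -(Complex.exp (Complex.I * θ₁) / l₂) *
      ((‖l₁‖ : ℂ) * Complex.exp (-Complex.I * κ) - Complex.exp (Complex.I * gam l₁ κ))]

/-- The eigenvector `e₋(κ)`. -/
def eM (l₁ l₂ : ℂ) (θ₁ : ℝ) (κ : ℝ) : Fin 2 → ℂ :=
  ![Complex.exp (-Complex.I * κ),
    -(Complex.exp (Complex.I * θ₁) / l₂) *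
      ((‖l₁‖ : ℂ) * Complex.exp (-Complex.I * κ) - Complex.exp (-Complex.I * gam l₁ κ))]

/-- `S(κ)`: the matrix with columns `e₊(κ)` and `e₋(κ)`. -/
def Smat (l₁ l₂ : ℂ) (θ₁ : ℝ) (κ : ℝ) : Matrix (Fin 2) (Fin 2) ℂ :=
  Matrix.of fun i j => if j = 0 then eP l₁ l₂ θ₁ κ i else eM l₁ l₂ θ₁ κ i

/-!
Unitarity and `det U = 1` force `U = !![l₁, l₂; -l̄₂, l̄₁]`, so `U(k)` has determinant `1` and
trace `2 |l₁| cos (k - θ₁)`. For every root `μ` of `μ² - 2 |l₁| cos (k - θ₁) μ + 1` a direct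
computation shows that `eVec … μ` is a `μ`-eigenvector of `U(k)`, and since
`cos γ = |l₁| cos (k - θ₁)` the two roots are `e^{± i γ}`, giving `e₊` and `e₋`. When
`sin γ > 0` these eigenvalues differ, so `e₊, e₋` are independent, `S` is invertible and
`U(k) S = S diag(e^{iγ}, e^{-iγ})`.
-/

namespace Matrix

theorem fin_two_entries_of_mem_unitaryGroup_of_det_eq_one {R : Type*} [CommRing R] [StarRing R]
    {a b c d : R} (hU : !![a, b; c, d] ∈ unitaryGroup (Fin 2) R)
    (hdet : (!![a, b; c, d] : Matrix (Fin 2) (Fin 2) R).det = 1) :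
    c = -star b ∧ d = star a := by
  have hstar : star !![a, b; c, d] = !![d, -b; -c, a] := by
    rw [← inv_eq_left_inv (mem_unitaryGroup_iff'.mp hU), inv_def, hdet, Ring.inverse_one,
      one_smul, adjugate_fin_two_of]
  have h00 := congrFun (congrFun hstar 0) 0
  have h10 := congrFun (congrFun hstar 1) 0
  simp only [star_apply, of_apply, cons_val', cons_val_zero, cons_val_one, empty_val',
    cons_val_fin_one] at h00 h10
  exact ⟨by rw [h10, neg_neg], h00.symm⟩

theorem linearIndependent_pair_of_mulVec_eq_smul {n K : Type*} [Fintype n] [DecidableEq n]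
    [Field K] {M : Matrix n n K} {v w : n → K} {a b : K} (hv : v ≠ 0) (hw : w ≠ 0)
    (hav : M *ᵥ v = a • v) (hbw : M *ᵥ w = b • w) (hab : a ≠ b) :
    LinearIndependent K ![v, w] := by
  refine Module.End.eigenvectors_linearIndependent' (toLin' M) ![a, b] ?_ _ ?_
  · intro i j; fin_cases i <;> fin_cases j <;> simp [hab, hab.symm]
  · intro i
    fin_cases i <;> simp [Module.End.hasEigenvector_iff, *]

theorem eq_mul_diagonal_mul_inv_of_mulVec_col {n R : Type*} [Fintype n] [DecidableEq n]
    [CommRing R] {M S : Matrix n n R} {d : n → R} (hS : IsUnit S)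
    (hM : ∀ j, M *ᵥ S.col j = d j • S.col j) : M = S * diagonal d * S⁻¹ := by
  have hMS : M * S = S * diagonal d := by
    ext i j
    rw [mul_diagonal, mul_comm]
    simpa [mul_apply, mulVec, dotProduct] using congrFun (hM j) i
  rw [← hMS, mul_nonsing_inv_cancel_right _ _ ((isUnit_iff_isUnit_det S).mp hS)]

end Matrix

theorem Complex.norm_sq_add_norm_sq_eq_one_of_det {a b : ℂ}
    (hdet : (!![a, b; -star b, star a] : Matrix (Fin 2) (Fin 2) ℂ).det = 1) :
    ‖a‖ ^ 2 + ‖b‖ ^ 2 = 1 := by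
  rw [det_fin_two_of, star_def] at hdet
  rw [← Complex.ofReal_inj]
  push_cast
  rw [← mul_conj', ← mul_conj']
  linear_combination hdet

theorem Complex.exp_I_mul_sq_add_one (x : ℂ) : exp (I * x) ^ 2 + 1 = 2 * cos x * exp (I * x) := by
  rw [two_cos, add_mul, ← exp_add, ← exp_add, ← exp_nat_mul]
  ring_nf
  rw [exp_zero, add_comm]

theorem cos_gam {l₁ : ℂ} (hl₁ : ‖l₁‖ ≤ 1) (κ : ℝ) : Real.cos (gam l₁ κ) = ‖l₁‖ * Real.cos κ := by
  have hbound : |‖l₁‖ * Real.cos κ| ≤ 1 := by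
    rw [abs_mul, abs_norm]
    exact mul_le_one₀ hl₁ (abs_nonneg _) (Real.abs_cos_le_one κ)
  exact Real.cos_arccos (abs_le.mp hbound).1 (abs_le.mp hbound).2

theorem Complex.exp_I_mul_ne_exp_neg_I_mul {x : ℝ} (hx : Real.sin x ≠ 0) :
    exp (I * x) ≠ exp (-I * x) := by
  intro h
  have h2 : 2 * Complex.sin x = 0 := by
    rw [two_sin, show -(x : ℂ) * I = -I * x by ring, mul_comm (x : ℂ) I, h, sub_self, zero_mul]
  exact hx (by exact_mod_cast (mul_eq_zero.mp h2).resolve_left two_ne_zero)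

def eVec (l₁ l₂ : ℂ) (θ₁ κ : ℝ) (μ : ℂ) : Fin 2 → ℂ :=
  ![exp (-I * κ), -(exp (I * θ₁) / l₂) * ((‖l₁‖ : ℂ) * exp (-I * κ) - μ)]

theorem eVec_ne_zero (l₁ l₂ : ℂ) (θ₁ κ : ℝ) (μ : ℂ) : eVec l₁ l₂ θ₁ κ μ ≠ 0 :=
  fun h => exp_ne_zero _ (congrFun h 0)

theorem Uk_mulVec_eVec {l₁ l₂ : ℂ} (hl₂ : l₂ ≠ 0) {θ₁ : ℝ}
    (hθ₁ : l₁ = (‖l₁‖ : ℂ) * exp (I * θ₁)) (hnorm : ‖l₁‖ ^ 2 + ‖l₂‖ ^ 2 = 1) (k : ℝ) {μ : ℂ}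
    (hμ : μ ^ 2 + 1 = 2 * Real.cos (k - θ₁) * ‖l₁‖ * μ) :
    Uk l₁ l₂ (-star l₂) (star l₁) k *ᵥ eVec l₁ l₂ θ₁ (k - θ₁) μ =
      μ • eVec l₁ l₂ θ₁ (k - θ₁) μ := by
  have hexp_neg_k : exp (-I * k) = (exp (I * (k - θ₁ : ℝ)) * exp (I * θ₁))⁻¹ := by
    rw [← exp_add, ← Complex.exp_neg]; push_cast; ring_nf
  have hexp_k : exp (I * k) = exp (I * (k - θ₁ : ℝ)) * exp (I * θ₁) := by
    rw [← exp_add]; push_cast; ring_nf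
  have hexp_neg_κ : exp (-I * (k - θ₁ : ℝ)) = (exp (I * (k - θ₁ : ℝ)))⁻¹ := by
    rw [← Complex.exp_neg, neg_mul]
  have hcos :
      exp (I * (k - θ₁ : ℝ)) * (2 * Real.cos (k - θ₁)) = exp (I * (k - θ₁ : ℝ)) ^ 2 + 1 := by
    rw [ofReal_cos, exp_I_mul_sq_add_one]; ring
  have hstar₁ : star l₁ = ‖l₁‖ * (exp (I * θ₁))⁻¹ := by
    conv_lhs => rw [hθ₁]
    rw [star_mul', ← Complex.exp_neg]; simp [← exp_conj]
  have hstar₂ : starRingEnd ℂ l₂ * l₂ = 1 - ‖l₁‖ ^ 2 := by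
    rw [mul_comm, mul_conj']; norm_cast; linarith
  simp only [Uk, eVec, hexp_neg_k, hexp_k, hexp_neg_κ, hstar₁]
  set A := exp (I * (k - θ₁ : ℝ))
  set B := exp (I * θ₁)
  have hA : A ≠ 0 := exp_ne_zero _
  have hB : B ≠ 0 := exp_ne_zero _
  ext i
  fin_cases i <;>
    simp only [mulVec, dotProduct, Fin.sum_univ_two, of_apply, cons_val', cons_val_zero,
      cons_val_one, cons_val_fin_one, Pi.smul_apply, smul_eq_mul, RCLike.star_def, Fin.zero_eta,
      Fin.mk_one, Fin.isValue] <;>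
    field_simp
  · linear_combination hθ₁
  · linear_combination -A * hstar₂ - A * hμ - ‖l₁‖ * μ * hcos

theorem Smat_col (l₁ l₂ : ℂ) (θ₁ κ : ℝ) :
    (Smat l₁ l₂ θ₁ κ).col = ![eP l₁ l₂ θ₁ κ, eM l₁ l₂ θ₁ κ] := by
  ext j i
  fin_cases j <;> rfl

theorem eigenvectors_and_diagonalization_of_Uk
    (l₁ l₂ r₁ r₂ : ℂ)
    (hU : !![l₁, l₂; r₁, r₂] ∈ Matrix.unitaryGroup (Fin 2) ℂ)
    (hdet : (!![l₁, l₂; r₁, r₂] : Matrix (Fin 2) (Fin 2) ℂ).det = 1)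
    (hl₂ : l₂ ≠ 0)
    (θ₁ : ℝ) (hθ₁ : l₁ = (‖l₁‖ : ℂ) * Complex.exp (Complex.I * θ₁))
    (k : ℝ) :
    (Uk l₁ l₂ r₁ r₂ k).mulVec (eP l₁ l₂ θ₁ (k - θ₁)) =
        Complex.exp (Complex.I * gam l₁ (k - θ₁)) • eP l₁ l₂ θ₁ (k - θ₁)
    ∧ (Uk l₁ l₂ r₁ r₂ k).mulVec (eM l₁ l₂ θ₁ (k - θ₁)) =
        Complex.exp (-Complex.I * gam l₁ (k - θ₁)) • eM l₁ l₂ θ₁ (k - θ₁)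
    ∧ (0 < Real.sin (gam l₁ (k - θ₁)) →
        LinearIndependent ℂ ![eP l₁ l₂ θ₁ (k - θ₁), eM l₁ l₂ θ₁ (k - θ₁)]
        ∧ Uk l₁ l₂ r₁ r₂ k =
          Smat l₁ l₂ θ₁ (k - θ₁) *
            Matrix.diagonal ![Complex.exp (Complex.I * gam l₁ (k - θ₁)),
              Complex.exp (-Complex.I * gam l₁ (k - θ₁))] *
            (Smat l₁ l₂ θ₁ (k - θ₁))⁻¹) := by
  obtain ⟨rfl, rfl⟩ := fin_two_entries_of_mem_unitaryGroup_of_det_eq_one hU hdet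
  have hnorm := norm_sq_add_norm_sq_eq_one_of_det hdet
  have hcos : Real.cos (gam l₁ (k - θ₁)) = ‖l₁‖ * Real.cos (k - θ₁) :=
    cos_gam (by nlinarith [sq_nonneg ‖l₂‖, norm_nonneg l₁]) _
  have hP : Uk l₁ l₂ (-star l₂) (star l₁) k *ᵥ eP l₁ l₂ θ₁ (k - θ₁) =
      exp (I * gam l₁ (k - θ₁)) • eP l₁ l₂ θ₁ (k - θ₁) := by
    refine Uk_mulVec_eVec hl₂ hθ₁ hnorm k ?_
    rw [exp_I_mul_sq_add_one, ← ofReal_cos, hcos]; push_cast; ring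
  have hM : Uk l₁ l₂ (-star l₂) (star l₁) k *ᵥ eM l₁ l₂ θ₁ (k - θ₁) =
      exp (-I * gam l₁ (k - θ₁)) • eM l₁ l₂ θ₁ (k - θ₁) := by
    refine Uk_mulVec_eVec hl₂ hθ₁ hnorm k ?_
    rw [neg_mul, ← mul_neg, exp_I_mul_sq_add_one, cos_neg, ← ofReal_cos, hcos]; push_cast; ring
  refine ⟨hP, hM, fun hsin => ?_⟩
  have hli : LinearIndependent ℂ ![eP l₁ l₂ θ₁ (k - θ₁), eM l₁ l₂ θ₁ (k - θ₁)] :=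
    linearIndependent_pair_of_mulVec_eq_smul (eVec_ne_zero _ _ _ _ _) (eVec_ne_zero _ _ _ _ _)
      hP hM (exp_I_mul_ne_exp_neg_I_mul hsin.ne')
  refine ⟨hli, eq_mul_diagonal_mul_inv_of_mulVec_col ?_ ?_⟩
  · rwa [← linearIndependent_cols_iff_isUnit, Smat_col]
  · rw [Fin.forall_fin_two, Smat_col]
    exact ⟨hP, hM⟩
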